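/- arXiv:2102.05858 — 2 statements merged into one kernel-verified Lean document; each statement's English description precedes it below -/
import Mathlib

section
/- Let X be a finite subset of ℝ^d that spans ℝ^d and let θ ∈ ℝ^d define a stochastic instance with unique optimal arm x*, gaps Δ_x, and instance-optimal constant c(X, θ). Then there exists N* : X → [0,∞), taking only finite values, such that H(N*) = Σ_{x∈X} N*_x x xᵀ is invertible, xᵀ H(N*)^{-1} x ≤ Δ_x²/2 for every x ∈ X \ {x*}, and Σ_{x∈X} N*_x Δ_x ≤ 2·c(X, θ). -/
open Finset

/-- `Smat X N` is the matrix `H(N) = ∑_{x ∈ X} N_x · x xᵀ`. -/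
noncomputable def Smat {d : ℕ} (X : Finset (Fin d → ℝ)) (N : (Fin d → ℝ) → ℝ) :
    Matrix (Fin d) (Fin d) ℝ :=
  ∑ x ∈ X, N x • Matrix.vecMulVec x x

/-- The set of objective values `∑_{x ≠ x*} N_x Δ_x` attained by feasible allocations `N`
in the lower-bound optimization problem; its infimum is `c(X, θ)`. -/
def lowerBoundObjValues {d : ℕ} (X : Finset (Fin d → ℝ)) (xstar : Fin d → ℝ)
    (Δ : (Fin d → ℝ) → ℝ) : Set ℝ :=
  {v : ℝ | ∃ N : (Fin d → ℝ) → ℝ, (∀ x ∈ X, 0 ≤ N x) ∧ IsUnit (Smat X N) ∧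
    (∀ x ∈ X, x ≠ xstar →
      dotProduct x ((Smat X N)⁻¹.mulVec x) ≤ Δ x ^ 2 / 2) ∧
    v = ∑ x ∈ X.erase xstar, N x * Δ x}

/-!
Scaling an allocation by `t` scales `H(N)⁻¹` by `t⁻¹`, so every allocation with `H(N)` invertible
becomes feasible after scaling up; in particular `c(X, θ)` is the infimum of a nonempty set.
If every arm is a multiple of `x*`, the allocation concentrated on `x*` already has invertible
`H(N)` (as `X` spans), and its scaled version is feasible with cost `0 ≤ 2c`.
Otherwise some linear functional `f` vanishes at `x*` but not at an arm `x₀`, and Cauchy–Schwarz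
for the form `H(N)` gives, for every feasible `N`,
`f(x₀)² ≤ (∑ N_x f(x)²) · x₀ᵀ H(N)⁻¹ x₀ ≤ K · cost(N) · Δ_{x₀}² / 2`
with `K = ∑_{x ≠ x*} f(x)² / Δ_x`.
Hence `c > 0`, and any feasible allocation of cost below `2c` works.
-/

open Matrix Filter

lemma Module.exists_dual_apply_eq_zero_apply_ne_zero {K V : Type*} [Field K] [AddCommGroup V]
    [Module K V] {x y : V} (hy : y ∉ Submodule.span K {x}) :
    ∃ f : Module.Dual K V, f x = 0 ∧ f y ≠ 0 := by
  obtain ⟨f, hfy, hf⟩ := Submodule.exists_dual_map_eq_bot_of_notMem hy inferInstance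
  refine ⟨f, ?_, hfy⟩
  simpa [hf] using Submodule.mem_map_of_mem (f := f) (Submodule.mem_span_singleton_self x)

lemma eq_zero_of_forall_dotProduct_eq_zero {R n : Type*} [CommSemiring R] [Fintype n]
    {s : Set (n → R)} (hs : Submodule.span R s = ⊤) {v : n → R} (hv : ∀ x ∈ s, x ⬝ᵥ v = 0) :
    v = 0 := by
  classical
  refine (dotProductEquiv R n).map_eq_zero_iff.1 (LinearMap.ext_on hs fun x hx => ?_)
  simpa [dotProduct_comm v] using hv x hx

section Smat

variable {d : ℕ} (X : Finset (Fin d → ℝ)) (N : (Fin d → ℝ) → ℝ)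

lemma Smat_mulVec (v : Fin d → ℝ) : Smat X N *ᵥ v = ∑ x ∈ X, (N x * (x ⬝ᵥ v)) • x := by
  simp only [Smat, sum_mulVec, smul_mulVec, vecMulVec_mulVec, op_smul_eq_smul, smul_smul]

lemma dotProduct_Smat_mulVec (u v : Fin d → ℝ) :
    u ⬝ᵥ Smat X N *ᵥ v = ∑ x ∈ X, N x * ((x ⬝ᵥ u) * (x ⬝ᵥ v)) := by
  rw [Smat_mulVec, dotProduct_sum]
  exact sum_congr rfl fun x _ => by rw [dotProduct_smul, smul_eq_mul, dotProduct_comm u]; ring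

lemma Smat_smul (t : ℝ) : Smat X (t • N) = t • Smat X N := by
  simp only [Smat, Finset.smul_sum, Pi.smul_apply, smul_eq_mul, smul_smul]

variable {X N}

lemma isUnit_Smat (hN : ∀ x ∈ X, 0 ≤ N x)
    (hspan : Submodule.span ℝ {x | x ∈ X ∧ N x ≠ 0} = ⊤) : IsUnit (Smat X N) := by
  rw [isUnit_iff_isUnit_det, isUnit_iff_ne_zero, Ne, ← exists_mulVec_eq_zero_iff]
  rintro ⟨v, hv0, hv⟩
  refine hv0 ?_
  have hquad : v ⬝ᵥ Smat X N *ᵥ v = 0 := by rw [hv, dotProduct_zero]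
  rw [dotProduct_Smat_mulVec] at hquad
  have hterms := (sum_eq_zero_iff_of_nonneg fun x hx =>
    mul_nonneg (hN x hx) (mul_self_nonneg _)).1 hquad
  refine eq_zero_of_forall_dotProduct_eq_zero hspan fun x ⟨hx, hNx⟩ => ?_
  simpa [hNx] using hterms x hx

lemma sq_apply_le_mul_dotProduct_inv_mulVec (hN : ∀ x ∈ X, 0 ≤ N x) (hH : IsUnit (Smat X N))
    (f : Module.Dual ℝ (Fin d → ℝ)) (y : Fin d → ℝ) :
    f y ^ 2 ≤ (∑ x ∈ X, N x * f x ^ 2) * (y ⬝ᵥ (Smat X N)⁻¹ *ᵥ y) := by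
  set u := (Smat X N)⁻¹ *ᵥ y
  have hy : Smat X N *ᵥ u = y := by
    rw [mulVec_mulVec, mul_nonsing_inv _ ((isUnit_iff_isUnit_det _).1 hH), one_mulVec]
  have hfy : f y = ∑ x ∈ X, N x * (f x * (x ⬝ᵥ u)) := by
    rw [← hy, Smat_mulVec, map_sum]
    exact sum_congr rfl fun x _ => by rw [map_smul, smul_eq_mul]; ring
  have hyu : y ⬝ᵥ u = ∑ x ∈ X, N x * (x ⬝ᵥ u) ^ 2 := by
    rw [dotProduct_comm, ← hy, dotProduct_Smat_mulVec]
    exact sum_congr rfl fun x _ => by ring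
  rw [hfy, hyu]
  refine sum_sq_le_sum_mul_sum_of_sq_le_mul _ (fun x hx => mul_nonneg (hN x hx) (sq_nonneg _))
    (fun x hx => mul_nonneg (hN x hx) (sq_nonneg _)) fun x _ => le_of_eq (by ring)

end Smat

section Allocation

variable {d : ℕ} {X : Finset (Fin d → ℝ)} {xstar : Fin d → ℝ} {Δ : (Fin d → ℝ) → ℝ}

variable (X xstar Δ) in
def IsFeasibleAllocation (N : (Fin d → ℝ) → ℝ) : Prop :=
  (∀ x ∈ X, 0 ≤ N x) ∧ IsUnit (Smat X N) ∧
    ∀ x ∈ X, x ≠ xstar → x ⬝ᵥ (Smat X N)⁻¹ *ᵥ x ≤ Δ x ^ 2 / 2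

lemma mem_lowerBoundObjValues {v : ℝ} :
    v ∈ lowerBoundObjValues X xstar Δ ↔
      ∃ N, IsFeasibleAllocation X xstar Δ N ∧ v = ∑ x ∈ X.erase xstar, N x * Δ x := by
  simp only [lowerBoundObjValues, IsFeasibleAllocation, Set.mem_ofPred_eq, and_assoc]

lemma exists_smul_isFeasibleAllocation (hΔ : ∀ x ∈ X.erase xstar, 0 < Δ x)
    {N : (Fin d → ℝ) → ℝ} (hN : ∀ x ∈ X, 0 ≤ N x) (hH : IsUnit (Smat X N)) :
    ∃ t : ℝ, IsFeasibleAllocation X xstar Δ (t • N) := by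
  have hsmall : ∀ᶠ t in atTop, ∀ x ∈ X.erase xstar,
      t⁻¹ * (x ⬝ᵥ (Smat X N)⁻¹ *ᵥ x) < Δ x ^ 2 / 2 :=
    (eventually_all_finset _).2 fun x hx => by
      have hΔx := hΔ x hx
      have hlim : Tendsto (fun t : ℝ => t⁻¹ * (x ⬝ᵥ (Smat X N)⁻¹ *ᵥ x)) atTop (nhds 0) := by
        simpa using (tendsto_inv_atTop_zero (𝕜 := ℝ)).mul_const _
      exact hlim.eventually_lt_const (by positivity)
  obtain ⟨t, hsmall_t, ht⟩ := (hsmall.and (eventually_gt_atTop 0)).exists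
  have hinv : (Smat X (t • N))⁻¹ = t⁻¹ • (Smat X N)⁻¹ := by
    have := Matrix.inv_smul' _ (Units.mk0 t ht.ne') ((isUnit_iff_isUnit_det _).1 hH)
    rwa [Units.smul_def, Units.smul_def, Units.val_inv_eq_inv_val, Units.val_mk0,
      ← Smat_smul] at this
  refine ⟨t, fun x hx => mul_nonneg ht.le (hN x hx), ?_, fun x hx hne => ?_⟩
  · rw [Smat_smul, ← Units.val_mk0 ht.ne', ← Units.smul_def]
    exact hH.smul _
  · rw [hinv, smul_mulVec, dotProduct_smul, smul_eq_mul]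
    exact (hsmall_t x (mem_erase.2 ⟨hne, hx⟩)).le

lemma lowerBoundObjValues_nonempty (hspan : Submodule.span ℝ (X : Set (Fin d → ℝ)) = ⊤)
    (hΔ : ∀ x ∈ X.erase xstar, 0 < Δ x) : (lowerBoundObjValues X xstar Δ).Nonempty := by
  obtain ⟨t, ht⟩ := exists_smul_isFeasibleAllocation hΔ (N := 1) (fun _ _ => zero_le_one)
    (isUnit_Smat (fun _ _ => zero_le_one) (by simpa using hspan))
  exact ⟨_, mem_lowerBoundObjValues.2 ⟨_, ht, rfl⟩⟩

lemma sInf_lowerBoundObjValues_nonneg (hΔ : ∀ x ∈ X.erase xstar, 0 < Δ x) :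
    0 ≤ sInf (lowerBoundObjValues X xstar Δ) := by
  refine Real.sInf_nonneg fun v hv => ?_
  obtain ⟨N, hN, rfl⟩ := mem_lowerBoundObjValues.1 hv
  exact sum_nonneg fun x hx => mul_nonneg (hN.1 x (mem_of_mem_erase hx)) (hΔ x hx).le

lemma exists_isFeasibleAllocation_supported_on_singleton
    (hspan : Submodule.span ℝ (X : Set (Fin d → ℝ)) = ⊤) (hΔ : ∀ x ∈ X.erase xstar, 0 < Δ x)
    (hxstar : xstar ∈ X) (hX : (X : Set (Fin d → ℝ)) ⊆ Submodule.span ℝ {xstar}) :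
    ∃ N, IsFeasibleAllocation X xstar Δ N ∧ ∀ x ≠ xstar, N x = 0 := by
  classical
  set N : (Fin d → ℝ) → ℝ := fun x => if x = xstar then 1 else 0
  have hN : ∀ x ∈ X, 0 ≤ N x := fun x _ => by positivity
  have hsupp : {x | x ∈ X ∧ N x ≠ 0} = {xstar} := by
    ext x
    by_cases hx : x = xstar <;> simp [N, hx, hxstar]
  have hstar : Submodule.span ℝ {xstar} = ⊤ := eq_top_iff.2 (hspan ▸ Submodule.span_le.2 hX)
  obtain ⟨t, ht⟩ := exists_smul_isFeasibleAllocation hΔ hN (isUnit_Smat hN (hsupp ▸ hstar))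
  exact ⟨t • N, ht, fun x hx => by simp [N, hx]⟩

lemma sq_apply_le_of_mem_lowerBoundObjValues (hΔ : ∀ x ∈ X.erase xstar, 0 < Δ x)
    {f : Module.Dual ℝ (Fin d → ℝ)} (hf : f xstar = 0) {x₀ : Fin d → ℝ} (hx₀ : x₀ ∈ X)
    (hx₀star : x₀ ≠ xstar) {v : ℝ} (hv : v ∈ lowerBoundObjValues X xstar Δ) :
    2 * f x₀ ^ 2 ≤ (∑ x ∈ X.erase xstar, f x ^ 2 / Δ x) * v * Δ x₀ ^ 2 := by
  obtain ⟨N, ⟨hN, hH, hfeas⟩, rfl⟩ := mem_lowerBoundObjValues.1 hv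
  set K := ∑ x ∈ X.erase xstar, f x ^ 2 / Δ x
  have hterm : ∀ x ∈ X.erase xstar, f x ^ 2 ≤ K * Δ x := fun x hx => by
    rw [← div_le_iff₀ (hΔ x hx)]
    exact single_le_sum (f := fun x => f x ^ 2 / Δ x)
      (fun y hy => div_nonneg (sq_nonneg _) (hΔ y hy).le) hx
  have hvar : ∑ x ∈ X, N x * f x ^ 2 ≤ K * ∑ x ∈ X.erase xstar, N x * Δ x := by
    rw [← sum_erase X (a := xstar) (by simp [hf]), mul_sum]
    exact sum_le_sum fun x hx => by nlinarith [hterm x hx, hN x (mem_of_mem_erase hx)]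
  calc 2 * f x₀ ^ 2
      ≤ 2 * ((∑ x ∈ X, N x * f x ^ 2) * (x₀ ⬝ᵥ (Smat X N)⁻¹ *ᵥ x₀)) := by
        gcongr; exact sq_apply_le_mul_dotProduct_inv_mulVec hN hH f x₀
    _ ≤ 2 * ((∑ x ∈ X, N x * f x ^ 2) * (Δ x₀ ^ 2 / 2)) := by
        gcongr
        · exact sum_nonneg fun x hx => mul_nonneg (hN x hx) (sq_nonneg _)
        · exact hfeas x₀ hx₀ hx₀star
    _ ≤ 2 * ((K * ∑ x ∈ X.erase xstar, N x * Δ x) * (Δ x₀ ^ 2 / 2)) := by gcongr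
    _ = _ := by ring

lemma sInf_lowerBoundObjValues_pos (hspan : Submodule.span ℝ (X : Set (Fin d → ℝ)) = ⊤)
    (hΔ : ∀ x ∈ X.erase xstar, 0 < Δ x) {f : Module.Dual ℝ (Fin d → ℝ)} (hf : f xstar = 0)
    {x₀ : Fin d → ℝ} (hx₀ : x₀ ∈ X) (hfx₀ : f x₀ ≠ 0) :
    0 < sInf (lowerBoundObjValues X xstar Δ) := by
  have hx₀star : x₀ ≠ xstar := by rintro rfl; exact hfx₀ hf
  have hΔx₀ := hΔ x₀ (mem_erase.2 ⟨hx₀star, hx₀⟩)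
  set K := ∑ x ∈ X.erase xstar, f x ^ 2 / Δ x
  have hK : 0 < K := by
    refine sum_pos' (fun y hy => div_nonneg (sq_nonneg _) (hΔ y hy).le)
      ⟨x₀, mem_erase.2 ⟨hx₀star, hx₀⟩, by positivity⟩
  refine lt_of_lt_of_le (b := 2 * f x₀ ^ 2 / (K * Δ x₀ ^ 2)) (by positivity) <|
    le_csInf (lowerBoundObjValues_nonempty hspan hΔ) fun v hv => ?_
  rw [div_le_iff₀ (by positivity)]
  linarith [sq_apply_le_of_mem_lowerBoundObjValues hΔ hf hx₀ hx₀star hv]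

end Allocation

/-- there is a finite-valued allocation `N*` feasible for the lower-bound
optimization problem whose objective value is at most `2·c(X, θ)`. -/
theorem exists_finite_near_optimal_allocation {d : ℕ} (X : Finset (Fin d → ℝ))
    (hspan : Submodule.span ℝ (↑X : Set (Fin d → ℝ)) = ⊤)
    (θ : Fin d → ℝ) (xstar : Fin d → ℝ) (hxstar : xstar ∈ X)
    (hopt : ∀ x ∈ X, x ≠ xstar → dotProduct xstar θ < dotProduct x θ)
    (Δ : (Fin d → ℝ) → ℝ) (hΔdef : ∀ x, Δ x = dotProduct (x - xstar) θ)
    (c : ℝ) (hc : c = sInf (lowerBoundObjValues X xstar Δ)) :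
    ∃ N : (Fin d → ℝ) → ℝ, (∀ x ∈ X, 0 ≤ N x) ∧ IsUnit (Smat X N) ∧
      (∀ x ∈ X, x ≠ xstar →
        dotProduct x ((Smat X N)⁻¹.mulVec x) ≤ Δ x ^ 2 / 2) ∧
      ∑ x ∈ X, N x * Δ x ≤ 2 * c := by
  have hΔ : ∀ x ∈ X.erase xstar, 0 < Δ x := fun x hx => by
    rw [hΔdef, sub_dotProduct]
    exact sub_pos.2 (hopt x (mem_of_mem_erase hx) (ne_of_mem_erase hx))
  have hΔstar : Δ xstar = 0 := by simp [hΔdef]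
  by_cases hX : (X : Set (Fin d → ℝ)) ⊆ Submodule.span ℝ {xstar}
  · obtain ⟨N, ⟨hN, hH, hfeas⟩, hNzero⟩ :=
      exists_isFeasibleAllocation_supported_on_singleton hspan hΔ hxstar hX
    refine ⟨N, hN, hH, hfeas, ?_⟩
    have hc0 : 0 ≤ c := hc ▸ sInf_lowerBoundObjValues_nonneg hΔ
    have hobj : ∑ x ∈ X, N x * Δ x = 0 := sum_eq_zero fun x _ => by
      by_cases hx : x = xstar
      · rw [hx, hΔstar, mul_zero]
      · rw [hNzero x hx, zero_mul]
    linarith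
  · obtain ⟨x₀, hx₀, hx₀span⟩ := Set.not_subset.1 hX
    obtain ⟨f, hf, hfx₀⟩ := Module.exists_dual_apply_eq_zero_apply_ne_zero hx₀span
    have hc_pos : 0 < c := hc ▸ sInf_lowerBoundObjValues_pos hspan hΔ hf hx₀ hfx₀
    obtain ⟨v, hv, hvc⟩ := exists_lt_of_csInf_lt (lowerBoundObjValues_nonempty hspan hΔ)
      (show sInf _ < 2 * c by linarith)
    obtain ⟨N, ⟨hN, hH, hfeas⟩, rfl⟩ := mem_lowerBoundObjValues.1 hv
    refine ⟨N, hN, hH, hfeas, ?_⟩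
    rw [← sum_erase X (a := xstar) (by rw [hΔstar, mul_zero])]
    exact hvc.le
end

section
/- Let X be a finite subset of ℝ^d that spans ℝ^d and let θ ∈ ℝ^d define a stochastic instance with unique optimal arm x*, gaps Δ_x, minimum gap Δ_min, and instance-optimal constant c(X, θ). Then c(X, θ) ≤ 48d/Δ_min. -/
/-!
Rescale every arm to `w_x = x / g_x`, where `g_x = Δ_x` for suboptimal arms. By the
Kiefer–Wolfowitz argument, a design `p` on the simplex maximizing `det (∑ p_x w_x w_xᵀ)` satisfies
`w_xᵀ H(p)⁻¹ w_x ≤ d` for every arm: moving mass `r` towards arm `x` multiplies the determinant by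
`(1 + r w_xᵀ H(p)⁻¹ w_x) / (1 + r)ᵈ`, which must stay `≤ 1` for all `r > 0`. The allocation
`N_x = 2d p_x / g_x²` is then feasible, and its cost `∑ 2d p_x / Δ_x` is at most `2d / Δ_min`.
-/

open Finset

open Matrix

theorem Matrix.det_add_vecMulVec {n α : Type*} [Fintype n] [DecidableEq n] [CommRing α]
    {A : Matrix n n α} (hA : IsUnit A.det) (u v : n → α) :
    (A + vecMulVec u v).det = A.det * (1 + v ⬝ᵥ A⁻¹ *ᵥ u) := by
  rw [vecMulVec_eq Unit, det_add_replicateCol_mul_replicateRow hA, Matrix.mul_assoc,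
    ← replicateCol_mulVec, det_unique (1 + _), add_apply, one_apply_eq,
    replicateRow_mul_replicateCol_apply]

theorem eq_zero_of_forall_dotProduct_eq_zero_s8 {n ι : Type*} [Fintype n] {w : ι → n → ℝ}
    (hw : Submodule.span ℝ (Set.range w) = ⊤) {u : n → ℝ} (hu : ∀ i, w i ⬝ᵥ u = 0) : u = 0 := by
  have h : (dotProductBilin ℝ ℝ).flip u = 0 := LinearMap.ext_on_range hw hu
  simpa using LinearMap.congr_fun h u

theorem le_of_forall_one_add_mul_le_one_add_pow {s : ℝ} {m : ℕ}
    (h : ∀ r : ℝ, 0 < r → 1 + r * s ≤ (1 + r) ^ m) : s ≤ m := by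
  have hslope := (hasDerivAt_pow m (1 : ℝ)).tendsto_slope_zero_right
  simp only [one_pow, mul_one] at hslope
  refine ge_of_tendsto hslope ?_
  filter_upwards [self_mem_nhdsWithin] with r (hr : 0 < r)
  rw [smul_eq_mul, le_inv_mul_iff₀ hr]
  linarith [h r hr]

theorem span_range_smul_eq_top {K M : Type*} [Field K] [AddCommGroup M] [Module K M] {s : Set M}
    (hs : Submodule.span K s = ⊤) {c : s → K} (hc : ∀ x, c x ≠ 0) :
    Submodule.span K (Set.range fun x : s => c x • (x : M)) = ⊤ := by
  refine eq_top_iff.2 (hs ▸ Submodule.span_le.2 fun x hx => ?_)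
  have hmem := (Submodule.span K (Set.range fun x : s => c x • (x : M))).smul_mem (c ⟨x, hx⟩)⁻¹
    (Submodule.subset_span ⟨⟨x, hx⟩, rfl⟩)
  rwa [smul_smul, inv_mul_cancel₀ (hc _), one_smul] at hmem

section Design

variable {n ι : Type*} [Fintype ι]

noncomputable def designMatrix (w : ι → n → ℝ) : (ι → ℝ) →ₗ[ℝ] Matrix n n ℝ :=
  Fintype.linearCombination ℝ fun i => vecMulVec (w i) (w i)

theorem designMatrix_apply (w : ι → n → ℝ) (p : ι → ℝ) :
    designMatrix w p = ∑ i, p i • vecMulVec (w i) (w i) :=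
  Fintype.linearCombination_apply ..

theorem designMatrix_single [DecidableEq ι] (w : ι → n → ℝ) (i : ι) (r : ℝ) :
    designMatrix w (Pi.single i r) = r • vecMulVec (w i) (w i) :=
  Fintype.linearCombination_apply_single ..

theorem designMatrix_smul_left (w : ι → n → ℝ) (c p : ι → ℝ) :
    designMatrix (fun i => c i • w i) p = designMatrix w fun i => c i ^ 2 * p i := by
  simp only [designMatrix_apply, smul_vecMulVec, vecMulVec_smul, smul_smul]
  exact Finset.sum_congr rfl fun i _ => by rw [mul_comm, sq, mul_assoc]

theorem dotProduct_designMatrix_mulVec [Fintype n] (w : ι → n → ℝ) (p : ι → ℝ) (u : n → ℝ) :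
    u ⬝ᵥ designMatrix w p *ᵥ u = ∑ i, p i * (w i ⬝ᵥ u) ^ 2 := by
  simp only [designMatrix_apply, sum_mulVec, dotProduct_sum, smul_mulVec, vecMulVec_mulVec,
    op_smul_eq_smul, dotProduct_smul, smul_eq_mul, dotProduct_comm u (w _), sq]

theorem isHermitian_designMatrix (w : ι → n → ℝ) (p : ι → ℝ) :
    (designMatrix w p).IsHermitian := by
  simp only [IsHermitian, conjTranspose_eq_transpose_of_trivial, designMatrix_apply,
    transpose_sum, transpose_smul, transpose_vecMulVec]

theorem posDef_designMatrix [Fintype n] {w : ι → n → ℝ}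
    (hw : Submodule.span ℝ (Set.range w) = ⊤) {p : ι → ℝ} (hp : ∀ i, 0 < p i) :
    (designMatrix w p).PosDef := by
  refine posDef_iff_dotProduct_mulVec.mpr ⟨isHermitian_designMatrix w p, fun u hu => ?_⟩
  obtain ⟨i, hi⟩ : ∃ i, w i ⬝ᵥ u ≠ 0 := by
    by_contra! h
    exact hu (eq_zero_of_forall_dotProduct_eq_zero_s8 hw h)
  rw [star_trivial, dotProduct_designMatrix_mulVec]
  exact Finset.sum_pos' (fun j _ => by have := hp j; positivity)
    ⟨i, Finset.mem_univ i, by have := hp i; positivity⟩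

theorem continuous_det_designMatrix [Fintype n] [DecidableEq n] (w : ι → n → ℝ) :
    Continuous fun p => (designMatrix w p).det :=
  (designMatrix w).continuous_of_finiteDimensional.matrix_det

theorem exists_mem_stdSimplex_dotProduct_inv_designMatrix_mulVec_le [Fintype n] [DecidableEq n]
    [Nonempty ι] {w : ι → n → ℝ} (hw : Submodule.span ℝ (Set.range w) = ⊤) :
    ∃ p ∈ stdSimplex ℝ ι, IsUnit (designMatrix w p).det ∧
      ∀ i, w i ⬝ᵥ (designMatrix w p)⁻¹ *ᵥ w i ≤ Fintype.card n := by
  classical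
  obtain ⟨p, hp, hmax⟩ := (isCompact_stdSimplex ℝ ι).exists_isMaxOn
    ⟨_, stdSimplex.barycenter.2⟩ (continuous_det_designMatrix w).continuousOn
  have hdet : 0 < (designMatrix w p).det :=
    (posDef_designMatrix hw fun _ => by simp only [stdSimplex.barycenter_apply]; positivity
      ).det_pos.trans_le (hmax stdSimplex.barycenter.2)
  refine ⟨p, hp, hdet.ne'.isUnit, fun i => le_of_forall_one_add_mul_le_one_add_pow fun r hr => ?_⟩
  set q := (1 + r)⁻¹ • p + (r / (1 + r)) • Pi.single i 1 with hq_def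
  have hq : q ∈ stdSimplex ℝ ι :=
    convex_stdSimplex ℝ ι hp (single_mem_stdSimplex ℝ i) (by positivity) (by positivity)
      (by field_simp)
  set H := designMatrix w p
  have hHq : designMatrix w q = (1 + r)⁻¹ • (H + vecMulVec (r • w i) (w i)) := by
    rw [hq_def, map_add, map_smul, map_smul, designMatrix_single, one_smul, smul_add,
      smul_vecMulVec, smul_smul, div_eq_inv_mul]
  have hle : (designMatrix w q).det ≤ H.det := hmax hq
  rw [hHq, det_smul, det_add_vecMulVec hdet.ne'.isUnit, mulVec_smul, dotProduct_smul,
    smul_eq_mul, inv_pow, inv_mul_le_iff₀ (by positivity), mul_comm] at hle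
  exact le_of_mul_le_mul_right hle hdet

end Design

theorem exists_allocation_dotProduct_inv_Smat_mulVec_le {d : ℕ} (hd : 0 < d)
    {X : Finset (Fin d → ℝ)} (hX : Submodule.span ℝ (X : Set (Fin d → ℝ)) = ⊤) (hne : X.Nonempty)
    {g : (Fin d → ℝ) → ℝ} (hg : ∀ x ∈ X, 0 < g x) :
    ∃ N : (Fin d → ℝ) → ℝ, (∀ x ∈ X, 0 ≤ N x) ∧ IsUnit (Smat X N) ∧
      (∀ x ∈ X, x ⬝ᵥ (Smat X N)⁻¹ *ᵥ x ≤ g x ^ 2 / 2) ∧ ∑ x ∈ X, N x * g x ^ 2 = 2 * d := by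
  classical
  have : Nonempty X := hne.to_subtype
  have hw : Submodule.span ℝ (Set.range fun x : X => (g x)⁻¹ • (x : Fin d → ℝ)) = ⊤ :=
    span_range_smul_eq_top hX fun x => inv_ne_zero (hg x x.2).ne'
  obtain ⟨p, hp, hunit, hbound⟩ := exists_mem_stdSimplex_dotProduct_inv_designMatrix_mulVec_le hw
  set N : (Fin d → ℝ) → ℝ := fun x => if hx : x ∈ X then 2 * d * p ⟨x, hx⟩ / g x ^ 2 else 0
  have hN (x : X) : N x = 2 * d * p x / g x ^ 2 := dif_pos x.2
  have hSmat :
      Smat X N = (2 * d : ℝ) • designMatrix (fun x : X => (g x)⁻¹ • (x : Fin d → ℝ)) p := by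
    rw [designMatrix_smul_left, ← map_smul, designMatrix_apply, Smat, ← Finset.sum_coe_sort X]
    refine Finset.sum_congr rfl fun x _ => ?_
    rw [hN, Pi.smul_apply, smul_eq_mul, inv_pow, div_eq_mul_inv, mul_comm (_⁻¹), mul_assoc]
  set H := designMatrix (fun x : X => (g x)⁻¹ • (x : Fin d → ℝ)) p
  have hd' : (2 * d : ℝ) ≠ 0 := by positivity
  have hSinv : (Smat X N)⁻¹ = (2 * d : ℝ)⁻¹ • H⁻¹ := by
    have := invertibleOfNonzero hd'
    rw [hSmat, Matrix.inv_smul _ _ hunit, invOf_eq_inv]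
  refine ⟨N, fun x hx => ?_, ?_, fun x hx => ?_, ?_⟩
  · have := hp.1 ⟨x, hx⟩
    have := hg x hx
    simp only [N, hx, dif_pos]
    positivity
  · rw [isUnit_iff_isUnit_det, hSmat, det_smul]
    exact (IsUnit.pow _ hd'.isUnit).mul hunit
  · have hgx := hg x hx
    have hq := hbound ⟨x, hx⟩
    simp only [mulVec_smul, smul_dotProduct, dotProduct_smul, smul_eq_mul, Fintype.card_fin] at hq
    rw [← mul_assoc, ← mul_inv, inv_mul_le_iff₀ (by positivity)] at hq
    rw [hSinv, smul_mulVec, dotProduct_smul, smul_eq_mul]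
    calc (2 * d : ℝ)⁻¹ * (x ⬝ᵥ H⁻¹ *ᵥ x) ≤ (2 * d : ℝ)⁻¹ * (g x * g x * d) :=
          mul_le_mul_of_nonneg_left hq (by positivity)
      _ = g x ^ 2 / 2 := by field_simp
  · rw [← Finset.sum_coe_sort X]
    calc ∑ x : X, N x * g x ^ 2 = ∑ x : X, 2 * d * p x :=
          Finset.sum_congr rfl fun x _ => by
            rw [hN, div_mul_cancel₀ _ (pow_pos (hg x x.2) 2).ne']
      _ = 2 * d := by rw [← Finset.mul_sum, hp.2, mul_one]

theorem bddBelow_lowerBoundObjValues {d : ℕ} {X : Finset (Fin d → ℝ)} {xstar : Fin d → ℝ}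
    {Δ : (Fin d → ℝ) → ℝ} (hΔ : ∀ x ∈ X, x ≠ xstar → 0 ≤ Δ x) :
    BddBelow (lowerBoundObjValues X xstar Δ) :=
  ⟨0, fun _ ⟨_, hN, _, _, hv⟩ => hv ▸ sum_nonneg fun x hx =>
    mul_nonneg (hN x (mem_of_mem_erase hx)) (hΔ x (mem_of_mem_erase hx) (ne_of_mem_erase hx))⟩

theorem instance_optimal_constant_le_general {d : ℕ} (X : Finset (Fin d → ℝ))
    (hspan : Submodule.span ℝ (↑X : Set (Fin d → ℝ)) = ⊤)
    (θ : Fin d → ℝ) (xstar : Fin d → ℝ)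
    (hopt : ∀ x ∈ X, x ≠ xstar → dotProduct xstar θ < dotProduct x θ)
    (Δ : (Fin d → ℝ) → ℝ) (hΔdef : ∀ x, Δ x = dotProduct (x - xstar) θ)
    (Δmin : ℝ) (hΔmin_le : ∀ x ∈ X, x ≠ xstar → Δmin ≤ Δ x)
    (hΔmin_mem : ∃ x ∈ X, x ≠ xstar ∧ Δ x = Δmin)
    (c : ℝ) (hc : c = sInf (lowerBoundObjValues X xstar Δ)) :
    c ≤ 48 * d / Δmin := by
  obtain ⟨x₀, hx₀, hx₀_ne, rfl⟩ := hΔmin_mem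
  have hΔpos : ∀ x ∈ X, x ≠ xstar → 0 < Δ x := fun x hx hne => by
    rw [hΔdef, sub_dotProduct, sub_pos]
    exact hopt x hx hne
  have hΔ₀ := hΔpos x₀ hx₀ hx₀_ne
  have hd : 0 < d := Nat.pos_of_ne_zero fun h => hx₀_ne (by subst h; exact Subsingleton.elim _ _)
  obtain ⟨N, hN, hunit, hfeas, hsum⟩ :=
    exists_allocation_dotProduct_inv_Smat_mulVec_le hd hspan ⟨x₀, hx₀⟩
      (g := fun x => max (Δ x) (Δ x₀)) fun _ _ => lt_max_of_lt_right hΔ₀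
  have hg (x) (hx : x ∈ X.erase xstar) : max (Δ x) (Δ x₀) = Δ x :=
    max_eq_left (hΔmin_le x (mem_of_mem_erase hx) (ne_of_mem_erase hx))
  have hmem : ∑ x ∈ X.erase xstar, N x * Δ x ∈ lowerBoundObjValues X xstar Δ :=
    ⟨N, hN, hunit, fun x hx hne => hg x (mem_erase.2 ⟨hne, hx⟩) ▸ hfeas x hx, rfl⟩
  calc c ≤ ∑ x ∈ X.erase xstar, N x * Δ x :=
        hc ▸ csInf_le (bddBelow_lowerBoundObjValues fun x hx hne => (hΔpos x hx hne).le) hmem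
    _ ≤ ∑ x ∈ X.erase xstar, N x * max (Δ x) (Δ x₀) ^ 2 / Δ x₀ := by
        refine sum_le_sum fun x hx => ?_
        obtain ⟨hne, hxX⟩ := mem_erase.1 hx
        rw [hg x hx, mul_div_assoc]
        refine mul_le_mul_of_nonneg_left ((le_div_iff₀ hΔ₀).2 ?_) (hN x hxX)
        rw [sq]
        exact mul_le_mul_of_nonneg_left (hΔmin_le x hxX hne) (hΔpos x hxX hne).le
    _ ≤ ∑ x ∈ X, N x * max (Δ x) (Δ x₀) ^ 2 / Δ x₀ :=
        sum_le_sum_of_subset_of_nonneg (erase_subset _ _) fun x hx _ => by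
          have := hN x hx
          positivity
    _ = 2 * d / Δ x₀ := by rw [← sum_div, hsum]
    _ ≤ 48 * d / Δ x₀ := by gcongr; norm_num

/-- the instance-optimal constant satisfies `c(X, θ) ≤ 48·d/Δ_min`. -/
theorem instance_optimal_constant_le {d : ℕ} (X : Finset (Fin d → ℝ))
    (hspan : Submodule.span ℝ (↑X : Set (Fin d → ℝ)) = ⊤)
    (θ : Fin d → ℝ) (xstar : Fin d → ℝ) (hxstar : xstar ∈ X)
    (hopt : ∀ x ∈ X, x ≠ xstar → dotProduct xstar θ < dotProduct x θ)
    (Δ : (Fin d → ℝ) → ℝ) (hΔdef : ∀ x, Δ x = dotProduct (x - xstar) θ)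
    (Δmin : ℝ) (hΔmin_le : ∀ x ∈ X, x ≠ xstar → Δmin ≤ Δ x)
    (hΔmin_mem : ∃ x ∈ X, x ≠ xstar ∧ Δ x = Δmin)
    (c : ℝ) (hc : c = sInf (lowerBoundObjValues X xstar Δ)) :
    c ≤ 48 * d / Δmin :=
  instance_optimal_constant_le_general X hspan θ xstar hopt Δ hΔdef Δmin hΔmin_le hΔmin_mem c hc
end
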